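/- arXiv:1406.6031 — 2 statements merged into one kernel-verified Lean document; each statement's English description precedes it below -/
import Mathlib

section
/- Let F₀ be a continuous distribution function on ℝ and suppose X ~ F₀((x-μ)/σ) with σ > 0. Let F⁺ be a reference distribution function for |Z| satisfying sup_{u ≥ η} (F⁺(u) - F₀⁺(u)) ≤ 0, where F₀⁺ is the distribution function of |(X-μ)/σ|. Let T₀ₙ → μ a.s. and S₀ₙ → σ a.s., set Ẑᵢ = (Xᵢ - T₀ₙ)/S₀ₙ for an i.i.d. sample X₁,...,Xₙ, let F̂ₙ⁺ be the empirical distribution of |Ẑᵢ|, and define dₙ = sup_{t ≥ η} {F⁺(t) - F̂ₙ⁺(t)}⁺. Then the proportion of flagged outliers n₀/n = ⌊n·dₙ⌋/n → 0 almost surely. -/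
/-!
With `Q` the law of `|(X - μ₀)/σ₀|` (whose cdf is `F₀⁺`), the hypothesis on `F⁺` gives
`dₙ ≤ sup_t {cdf Q t - F̂ₙ⁺(t)}⁺`, so it suffices that `F̂ₙ⁺` is eventually uniformly at least
`cdf Q - ε`. Since `P` has a continuous cdf it has no atoms, hence neither has `Q`, and `cdf Q` is
continuous. For fixed `t` and rational `q < t`, once `σ₀ q + |Tₙ - μ₀| < Sₙ t` every observation
with `|(Xᵢ - μ₀)/σ₀| ≤ q` also has `|Ẑᵢ| ≤ t`, so by the strong law (on the countably many `q`)
`liminf F̂ₙ⁺(t) ≥ cdf Q q`, which is close to `cdf Q t`. Pólya's argument for monotone functions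
converging to a continuous cdf upgrades this pointwise bound to a uniform one, and
`⌊n dₙ⌋ / n` is squeezed between `dₙ - 1/n` and `dₙ`.
-/

open MeasureTheory ProbabilityTheory Filter Finset
open Topology

noncomputable def empiricalCDF (y : ℕ → ℝ) (n : ℕ) (t : ℝ) : ℝ :=
  (1 / n : ℝ) * ∑ i ∈ range n, if y i ≤ t then 1 else 0

lemma empiricalCDF_nonneg (y : ℕ → ℝ) (n : ℕ) (t : ℝ) : 0 ≤ empiricalCDF y n t :=
  mul_nonneg (by positivity) (sum_nonneg fun i _ => by split_ifs <;> norm_num)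

lemma empiricalCDF_le_empiricalCDF {x y : ℕ → ℝ} {n : ℕ} {s t : ℝ}
    (h : ∀ i, x i ≤ s → y i ≤ t) : empiricalCDF x n s ≤ empiricalCDF y n t := by
  refine mul_le_mul_of_nonneg_left (sum_le_sum fun i _ => ?_) (by positivity)
  by_cases hi : x i ≤ s <;> simp [hi, h i, apply_ite]

lemma monotone_empiricalCDF (y : ℕ → ℝ) (n : ℕ) : Monotone (empiricalCDF y n) :=
  fun _ _ hst => empiricalCDF_le_empiricalCDF fun _ hi => hi.trans hst

lemma empiricalCDF_eq_sum_indicator_div (y : ℕ → ℝ) (n : ℕ) (t : ℝ) :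
    empiricalCDF y n t = (∑ i ∈ range n, (Set.Iic t).indicator 1 (y i)) / n := by
  simp only [empiricalCDF, Set.indicator_apply, Set.mem_Iic, Pi.one_apply]
  ring

theorem ae_tendsto_empiricalCDF {Ω : Type*} [MeasurableSpace Ω] {μ : Measure Ω}
    {Y : ℕ → Ω → ℝ} (hY : ∀ i, Measurable (Y i))
    (hindep : Pairwise fun i j => IndepFun (Y i) (Y j) μ)
    {Q : Measure ℝ} [IsProbabilityMeasure Q] (hlaw : ∀ i, μ.map (Y i) = Q) (t : ℝ) :
    ∀ᵐ ω ∂μ, Tendsto (fun n => empiricalCDF (fun i => Y i ω) n t) atTop (𝓝 (cdf Q t)) := by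
  set g : ℝ → ℝ := (Set.Iic t).indicator 1
  have hg : Measurable g := measurable_one.indicator measurableSet_Iic
  have hint : Integrable (g ∘ Y 0) μ := by
    refine (integrable_map_measure hg.aestronglyMeasurable (hY 0).aemeasurable).1 ?_
    rw [hlaw 0]
    exact (integrable_const 1).indicator measurableSet_Iic
  have hident : ∀ i, IdentDistrib (g ∘ Y i) (g ∘ Y 0) μ μ := fun i =>
    IdentDistrib.comp ⟨(hY i).aemeasurable, (hY 0).aemeasurable, by rw [hlaw, hlaw]⟩ hg
  have hmean : μ[g ∘ Y 0] = cdf Q t := by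
    rw [cdf_eq_real, ← hlaw 0, Function.comp_def,
      ← integral_map (hY 0).aemeasurable hg.aestronglyMeasurable]
    exact integral_indicator_one measurableSet_Iic
  filter_upwards [strong_law_ae_real (fun i => g ∘ Y i) hint
    (fun i j hij => (hindep hij).comp hg hg) hident] with ω hω
  rw [← hmean]
  simp_rw [empiricalCDF_eq_sum_indicator_div]
  exact hω

lemma nullSingletonClass_of_continuous_cdf {P : Measure ℝ} [IsProbabilityMeasure P]
    (hP : Continuous (cdf P)) : NullSingletonClass P where
  measure_singleton a := by
    rw [← measure_cdf P, StieltjesFunction.measure_singleton,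
      hP.continuousWithinAt.leftLim_eq, sub_self, ENNReal.ofReal_zero]

lemma continuous_cdf_of_nullSingletonClass (Q : Measure ℝ) [IsProbabilityMeasure Q]
    [NullSingletonClass Q] : Continuous (cdf Q) := by
  refine continuous_iff_continuousAt.2 fun a => continuousAt_iff_continuous_left_right.2
    ⟨?_, (cdf Q).right_continuous a⟩
  have hleft : Function.leftLim (cdf Q) a = cdf Q a := by
    have h := measure_singleton (μ := Q) a
    rw [← measure_cdf Q, StieltjesFunction.measure_singleton, ENNReal.ofReal_eq_zero] at h
    exact le_antisymm (Monotone.leftLim_le (cdf Q).mono le_rfl) (by linarith)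
  exact continuousWithinAt_Iio_iff_Iic.1
    ((monotone_cdf Q).continuousWithinAt_Iio_iff_leftLim_eq.2 hleft)

lemma nullSingletonClass_map_of_finite_preimage {P : Measure ℝ} [NullSingletonClass P]
    {f : ℝ → ℝ} (hf : Measurable f) (hfin : ∀ y, (f ⁻¹' {y}).Finite) :
    NullSingletonClass (P.map f) where
  measure_singleton y := by
    rw [Measure.map_apply hf (measurableSet_singleton y)]
    exact (hfin y).measure_zero P

lemma finite_preimage_abs_sub_div {m s : ℝ} (hs : s ≠ 0) (y : ℝ) :
    ((fun x => |(x - m) / s|) ⁻¹' {y}).Finite := by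
  refine ((Set.finite_singleton (m - s * y)).insert (m + s * y)).subset fun x hx => ?_
  rcases eq_or_eq_neg_of_abs_eq hx with h | h <;> field_simp at h
  · exact Or.inl (by linarith)
  · exact Or.inr (Set.mem_singleton_iff.2 (by linarith))

lemma ContinuousAt.exists_rat_lt_and_lt_add {F : ℝ → ℝ} {t : ℝ} (hF : ContinuousAt F t)
    {ε : ℝ} (hε : 0 < ε) : ∃ q : ℚ, (q : ℝ) < t ∧ F t < F q + ε := by
  have hnear : ∀ᶠ s in 𝓝 t, F t - ε < F s := hF.eventually (lt_mem_nhds (by linarith))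
  obtain ⟨l, hlt, hl⟩ := exists_Ioc_subset_of_mem_nhds hnear ⟨t - 1, by linarith⟩
  obtain ⟨q, hlq, hqt⟩ := exists_rat_btwn hlt
  exact ⟨q, hqt, by linarith [show F t - ε < F q from hl ⟨hlq, hqt.le⟩]⟩

-- A one-sided form of Pólya's theorem.
theorem eventually_forall_cdf_le_add {ι : Type*} {l : Filter ι} {Q : Measure ℝ}
    [IsProbabilityMeasure Q] (hQ : Continuous (cdf Q)) {G : ι → ℝ → ℝ}
    (hG_mono : ∀ n, Monotone (G n)) (hG_nonneg : ∀ n t, 0 ≤ G n t)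
    (hG : ∀ t, ∀ ε > 0, ∀ᶠ n in l, cdf Q t < G n t + ε) {ε : ℝ} (hε : 0 < ε) :
    ∀ᶠ n in l, ∀ t, cdf Q t ≤ G n t + ε := by
  have hε2 : 0 < ε / 2 := half_pos hε
  obtain ⟨a, ha⟩ := eventually_atBot.1 ((tendsto_cdf_atBot Q).eventually (gt_mem_nhds hε))
  obtain ⟨b, hb⟩ := eventually_atTop.1
    ((tendsto_cdf_atTop Q).eventually (lt_mem_nhds (by linarith : 1 - ε / 2 < 1)))
  set U : ℝ → Set ℝ := fun s => Set.Ioi s ∩ cdf Q ⁻¹' Set.Iio (cdf Q s + ε / 2)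
  have hU : ∀ s, IsOpen (U s) := fun s => isOpen_Ioi.inter (isOpen_Iio.preimage hQ)
  have hcover : Set.Icc a b ⊆ ⋃ s, U s := fun r _ => by
    obtain ⟨q, hqr, hq⟩ := hQ.continuousAt.exists_rat_lt_and_lt_add hε2
    exact Set.mem_iUnion.2 ⟨q, hqr, hq⟩
  obtain ⟨S, hS⟩ := isCompact_Icc.elim_finite_subcover U hU hcover
  filter_upwards [(eventually_all_finset S).2 fun s _ => hG s _ hε2, hG b _ hε2]
    with n hSn hbn t
  rcases le_or_gt t a with hta | hta
  · linarith [ha t hta, hG_nonneg n t]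
  rcases le_or_gt b t with hbt | hbt
  · linarith [cdf_le_one Q t, hb b le_rfl, hG_mono n hbt]
  obtain ⟨s, hs, hst, hts⟩ := Set.mem_iUnion₂.1 (hS ⟨hta.le, hbt.le⟩)
  linarith [hSn s hs, hG_mono n hst.le, show cdf Q t < cdf Q s + ε / 2 from hts]

theorem eventually_cdf_lt_empiricalCDF_abs_sub_div_add {Q : Measure ℝ} [IsProbabilityMeasure Q]
    (hQ : Continuous (cdf Q)) {x T S : ℕ → ℝ} {m s : ℝ} (hs : 0 < s)
    (hT : Tendsto T atTop (𝓝 m)) (hS : Tendsto S atTop (𝓝 s))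
    (hx : ∀ q : ℚ, Tendsto (fun n => empiricalCDF (fun i => |(x i - m) / s|) n q) atTop
      (𝓝 (cdf Q q)))
    (t : ℝ) {ε : ℝ} (hε : 0 < ε) :
    ∀ᶠ n in atTop, cdf Q t < empiricalCDF (fun i => |(x i - T n) / S n|) n t + ε := by
  obtain ⟨q, hqt, hq⟩ := hQ.continuousAt.exists_rat_lt_and_lt_add (half_pos hε)
  have hmargin : ∀ᶠ n in atTop, s * q + |T n - m| < S n * t := by
    refine Tendsto.eventually_lt ?_ (hS.mul_const t) (mul_lt_mul_of_pos_left hqt hs)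
    simpa using tendsto_const_nhds.add (hT.sub_const m).abs
  filter_upwards [hmargin, hS.eventually (eventually_gt_nhds hs),
    (hx q).eventually (eventually_gt_nhds (by linarith : cdf Q q - ε / 2 < cdf Q q))]
    with n hn hSpos hxn
  have hcompare : empiricalCDF (fun i => |(x i - m) / s|) n q ≤
      empiricalCDF (fun i => |(x i - T n) / S n|) n t := by
    refine empiricalCDF_le_empiricalCDF fun i hi => ?_
    rw [abs_div, abs_of_pos hs, div_le_iff₀ hs] at hi
    rw [abs_div, abs_of_pos hSpos, div_le_iff₀ hSpos]
    linarith [abs_sub_le (x i) m (T n), abs_sub_comm m (T n)]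
  linarith

lemma tendsto_iSup_max_sub_zero {ι κ : Type*} {l : Filter κ} {F : ι → ℝ} {G : κ → ι → ℝ}
    (h : ∀ ε > 0, ∀ᶠ n in l, ∀ i, F i ≤ G n i + ε) :
    Tendsto (fun n => ⨆ i, max (F i - G n i) 0) l (𝓝 0) := by
  refine tendsto_order.2 ⟨fun a ha => Eventually.of_forall fun n =>
    ha.trans_le (Real.iSup_nonneg fun i => le_max_right _ _), fun a ha => ?_⟩
  filter_upwards [h (a / 2) (half_pos ha)] with n hn
  refine (Real.iSup_le (fun i => max_le ?_ (half_pos ha).le) (half_pos ha).le).trans_lt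
    (half_lt_self ha)
  linarith [hn i]

lemma tendsto_floor_natCast_mul_div {d : ℕ → ℝ} {c : ℝ} (hd : Tendsto d atTop (𝓝 c)) :
    Tendsto (fun n : ℕ => (⌊(n : ℝ) * d n⌋ : ℝ) / n) atTop (𝓝 c) := by
  have hlower : Tendsto (fun n : ℕ => d n - 1 / n) atTop (𝓝 c) := by
    simpa using hd.sub tendsto_one_div_atTop_nhds_zero_nat
  refine tendsto_of_tendsto_of_tendsto_of_le_of_le' hlower hd ?_ ?_ <;>
    filter_upwards [eventually_gt_atTop 0] with n hn <;>
    have hn' : (0 : ℝ) < n := Nat.cast_pos.2 hn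
  · rw [le_div_iff₀ hn', sub_mul, one_div_mul_cancel hn'.ne', mul_comm]
    exact (Int.sub_one_lt_floor _).le
  · rw [div_le_iff₀ hn', mul_comm]
    exact Int.floor_le _

theorem gy_filter_flagged_proportion_tendsto_zero_general
    {Ω : Type*} [MeasurableSpace Ω] (μ : Measure Ω) [IsProbabilityMeasure μ]
    (X : ℕ → Ω → ℝ) (hXmeas : ∀ i, Measurable (X i))
    (hindep : iIndepFun X μ)
    (P : Measure ℝ) [IsProbabilityMeasure P] (hlaw : ∀ i, μ.map (X i) = P)
    (F₀ : ℝ → ℝ) (hF₀cont : Continuous F₀) (μ₀ σ₀ : ℝ) (hσ₀ : 0 < σ₀)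
    (hcdf : ∀ x : ℝ, (P (Set.Iic x)).toReal = F₀ ((x - μ₀) / σ₀))
    (Fplus : ℝ → ℝ) (η : ℝ)
    (hdom : ∀ u : ℝ, η ≤ u → Fplus u ≤ (P {x : ℝ | |(x - μ₀) / σ₀| ≤ u}).toReal)
    (T S : ℕ → Ω → ℝ)
    (hT : ∀ᵐ ω ∂μ, Tendsto (fun n => T n ω) atTop (nhds μ₀))
    (hS : ∀ᵐ ω ∂μ, Tendsto (fun n => S n ω) atTop (nhds σ₀)) :
    ∀ᵐ ω ∂μ,
      Tendsto (fun n : ℕ =>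
          (⌊(n : ℝ) * ⨆ t : Set.Ici η,
              max (Fplus t -
                (1 / n : ℝ) * ∑ i ∈ range n,
                  (if |(X i ω - T n ω) / S n ω| ≤ (t : ℝ) then (1 : ℝ) else 0)) 0⌋ : ℝ) / n)
        atTop (nhds 0) := by
  set φ : ℝ → ℝ := fun x => |(x - μ₀) / σ₀|
  have hφ : Measurable φ := by fun_prop
  set Q := P.map φ
  have : IsProbabilityMeasure Q := Measure.isProbabilityMeasure_map hφ.aemeasurable
  have hcdfP : cdf P = fun x => F₀ ((x - μ₀) / σ₀) :=
    funext fun x => by rw [cdf_eq_real, measureReal_def, hcdf]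
  have : NullSingletonClass P := nullSingletonClass_of_continuous_cdf (hcdfP ▸ by fun_prop)
  have : NullSingletonClass Q :=
    nullSingletonClass_map_of_finite_preimage hφ (finite_preimage_abs_sub_div hσ₀.ne')
  have hQ : Continuous (cdf Q) := continuous_cdf_of_nullSingletonClass Q
  have hdomQ : ∀ t, η ≤ t → Fplus t ≤ cdf Q t := fun t ht => by
    rw [cdf_eq_real, measureReal_def, Measure.map_apply hφ measurableSet_Iic]
    exact hdom t ht
  have hslln : ∀ᵐ ω ∂μ, ∀ q : ℚ, Tendsto (fun n => empiricalCDF (fun i => φ (X i ω)) n q)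
      atTop (𝓝 (cdf Q q)) := ae_all_iff.2 fun q =>
    ae_tendsto_empiricalCDF (fun i => hφ.comp (hXmeas i))
      (fun i j hij => (hindep.indepFun hij).comp hφ hφ)
      (fun i => by rw [← Measure.map_map hφ (hXmeas i), hlaw]) q
  filter_upwards [hT, hS, hslln] with ω hTω hSω hω
  refine tendsto_floor_natCast_mul_div (tendsto_iSup_max_sub_zero fun ε hε => ?_)
  filter_upwards [eventually_forall_cdf_le_add hQ (fun n => monotone_empiricalCDF _ n)
    (fun n => empiricalCDF_nonneg _ n)
    (fun t _ => eventually_cdf_lt_empiricalCDF_abs_sub_div_add hQ hσ₀ hTω hSω hω t) hε]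
    with n hn t
  exact (hdomQ t t.2).trans (hn t)

/-- Proposition 1 (consistency of the Gervini–Yohai filter). Let `X₁, X₂, ...` be
an i.i.d. sample with common law `P` having continuous distribution function
`F₀((x - μ₀)/σ₀)`, `σ₀ > 0`. Let `F⁺` be a reference distribution function with
`sup_{u ≥ η} (F⁺(u) - F₀⁺(u)) ≤ 0`, where `F₀⁺` is the distribution function of
`|(X - μ₀)/σ₀|`. Let `T₀ₙ → μ₀` and `S₀ₙ → σ₀` almost surely, let
`F̂ₙ⁺(t) = (1/n) Σᵢ₌₁ⁿ 1{|Ẑᵢ| ≤ t}` with `Ẑᵢ = (Xᵢ - T₀ₙ)/S₀ₙ`, and define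
`dₙ = sup_{t ≥ η} {F⁺(t) - F̂ₙ⁺(t)}⁺`. Then the proportion of flagged outliers
`⌊n·dₙ⌋/n → 0` almost surely. -/
theorem gy_filter_flagged_proportion_tendsto_zero
    {Ω : Type*} [MeasurableSpace Ω] (μ : Measure Ω) [IsProbabilityMeasure μ]
    (X : ℕ → Ω → ℝ) (hXmeas : ∀ i, Measurable (X i))
    (hindep : iIndepFun X μ)
    (P : Measure ℝ) [IsProbabilityMeasure P] (hlaw : ∀ i, μ.map (X i) = P)
    (F₀ : ℝ → ℝ) (hF₀cont : Continuous F₀) (μ₀ σ₀ : ℝ) (hσ₀ : 0 < σ₀)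
    (hcdf : ∀ x : ℝ, (P (Set.Iic x)).toReal = F₀ ((x - μ₀) / σ₀))
    (Fplus : ℝ → ℝ) (η : ℝ)
    (hdom : ∀ u : ℝ, η ≤ u → Fplus u ≤ (P {x : ℝ | |(x - μ₀) / σ₀| ≤ u}).toReal)
    (T S : ℕ → Ω → ℝ)
    (hT : ∀ᵐ ω ∂μ, Tendsto (fun n => T n ω) atTop (nhds μ₀))
    (hS : ∀ᵐ ω ∂μ, Tendsto (fun n => S n ω) atTop (nhds σ₀))
    (hSpos : ∀ n ω, 0 < S n ω) :
    ∀ᵐ ω ∂μ,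
      Tendsto (fun n : ℕ =>
          (⌊(n : ℝ) * ⨆ t : Set.Ici η,
              max (Fplus t -
                (1 / n : ℝ) * ∑ i ∈ range n,
                  (if |(X i ω - T n ω) / S n ω| ≤ (t : ℝ) then (1 : ℝ) else 0)) 0⌋ : ℝ) / n)
        atTop (nhds 0) :=
  gy_filter_flagged_proportion_tendsto_zero_general μ X hXmeas hindep P hlaw F₀ hF₀cont μ₀ σ₀ hσ₀
    hcdf Fplus η hdom T S hT hS
end

section
/- Let Z₁, Z₂, ... be i.i.d. random vectors in ℝᵏ with distribution Q, let f: ℝᵏ × ℝʰ → ℝ be continuous, and suppose for some δ > 0 that E_Q[sup_{‖λ-λ₀‖≤δ} |f(Z,λ)|] < ∞. If λ̂ₙ → λ₀ almost surely, then (1/n) Σᵢ₌₁ⁿ f(Zᵢ, λ̂ₙ) → E_Q[f(Z, λ₀)] almost surely. -/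
/-!
Sandwich the averages between envelopes. For `r > 0` put `U_r z = sup_{‖λ - λ₀‖ ≤ r} f(z, λ)`;
it is continuous in `z`, dominated by the integrable envelope, and decreases to `f(z, λ₀)` as
`r → 0`, so `E U_r → E f(Z, λ₀)` by dominated convergence. Once `λ̂ₙ` lies in the ball of
radius `r`, the average of `f(Zᵢ, λ̂ₙ)` is at most the average of `U_r(Zᵢ)`, which tends to
`E U_r` by the strong law. Applying this to `-f` gives the matching lower bound.
-/

open Filter MeasureTheory ProbabilityTheory Finset Metric Topology Function

section ClosedBallSup

variable {E Λ : Type*} [PseudoMetricSpace Λ]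

noncomputable def closedBallSup (f : E → Λ → ℝ) (lam₀ : Λ) (r : ℝ) (z : E) : ℝ :=
  sSup (f z '' closedBall lam₀ r)

variable {f : E → Λ → ℝ} {lam₀ : Λ}

theorem abs_closedBallSup_le {r δ : ℝ} {z : E} {g : E → ℝ} (hr : 0 ≤ r) (hrδ : r ≤ δ)
    (hfg : ∀ lam ∈ closedBall lam₀ δ, |f z lam| ≤ g z) :
    |closedBallSup f lam₀ r z| ≤ g z := by
  have hsub : closedBall lam₀ r ⊆ closedBall lam₀ δ := closedBall_subset_closedBall hrδ
  have hle : ∀ y ∈ f z '' closedBall lam₀ r, y ≤ g z := by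
    rintro _ ⟨lam, hlam, rfl⟩
    exact (le_abs_self _).trans (hfg lam (hsub hlam))
  have hcenter : f z lam₀ ∈ f z '' closedBall lam₀ r := ⟨lam₀, mem_closedBall_self hr, rfl⟩
  rw [abs_le]
  constructor
  · calc -g z ≤ f z lam₀ := neg_le_of_abs_le (hfg lam₀ (hsub (mem_closedBall_self hr)))
      _ ≤ closedBallSup f lam₀ r z := le_csSup ⟨g z, hle⟩ hcenter
  · exact csSup_le ⟨_, hcenter⟩ hle

variable [ProperSpace Λ]

theorem le_closedBallSup {r : ℝ} {z : E} {lam : Λ} (hfz : Continuous (f z))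
    (hlam : lam ∈ closedBall lam₀ r) : f z lam ≤ closedBallSup f lam₀ r z :=
  le_csSup ((isCompact_closedBall lam₀ r).bddAbove_image hfz.continuousOn) ⟨lam, hlam, rfl⟩

theorem tendsto_closedBallSup_nhdsGT {z : E} (hfz : Continuous (f z)) :
    Tendsto (fun r => closedBallSup f lam₀ r z) (𝓝[>] 0) (𝓝 (f z lam₀)) := by
  refine tendsto_order.2 ⟨fun a ha => ?_, fun a ha => ?_⟩
  · filter_upwards [self_mem_nhdsWithin] with r (hr : 0 < r)
    exact ha.trans_le (le_closedBallSup hfz (mem_closedBall_self hr.le))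
  · obtain ⟨η, hη, hball⟩ : ∃ η > 0, ball lam₀ η ⊆ {lam | f z lam < a} :=
      isOpen_iff.1 (isOpen_lt hfz continuous_const) lam₀ ha
    filter_upwards [self_mem_nhdsWithin, nhdsWithin_le_nhds (Iio_mem_nhds hη)]
      with r (hr : 0 < r) (hrη : r < η)
    refine ((isCompact_closedBall lam₀ r).sSup_lt_iff_of_continuous
      (nonempty_closedBall.2 hr.le) hfz.continuousOn a).2 fun lam hlam => ?_
    exact hball (closedBall_subset_ball hrη hlam)

variable [TopologicalSpace E]

theorem continuous_closedBallSup (hf : Continuous (uncurry f)) (r : ℝ) :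
    Continuous (closedBallSup f lam₀ r) :=
  (isCompact_closedBall lam₀ r).continuous_sSup hf

variable [MeasurableSpace E] [OpensMeasurableSpace E] {Q : Measure E} {δ : ℝ} {g : E → ℝ}

theorem integrable_closedBallSup (hf : Continuous (uncurry f)) (hg : Integrable g Q)
    (hfg : ∀ z, ∀ lam ∈ closedBall lam₀ δ, |f z lam| ≤ g z) {r : ℝ} (hr : 0 ≤ r)
    (hrδ : r ≤ δ) : Integrable (closedBallSup f lam₀ r) Q :=
  hg.mono' (continuous_closedBallSup hf r).aestronglyMeasurable
    (ae_of_all _ fun z => abs_closedBallSup_le hr hrδ (hfg z))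

theorem tendsto_integral_closedBallSup_nhdsGT (hf : Continuous (uncurry f)) (hδ : 0 < δ)
    (hg : Integrable g Q) (hfg : ∀ z, ∀ lam ∈ closedBall lam₀ δ, |f z lam| ≤ g z) :
    Tendsto (fun r => ∫ z, closedBallSup f lam₀ r z ∂Q) (𝓝[>] 0) (𝓝 (∫ z, f z lam₀ ∂Q)) :=
  tendsto_integral_filter_of_dominated_convergence g
    (Eventually.of_forall fun r => (continuous_closedBallSup hf r).aestronglyMeasurable)
    (by
      filter_upwards [Ioc_mem_nhdsGT hδ] with r hr
      exact ae_of_all _ fun z => abs_closedBallSup_le hr.1.le hr.2 (hfg z))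
    hg (ae_of_all _ fun z => tendsto_closedBallSup_nhdsGT (hf.uncurry_left z))

end ClosedBallSup

theorem ae_tendsto_sum_comp_div {Ω E : Type*} [MeasurableSpace Ω] {μ : Measure Ω}
    [MeasurableSpace E] {Q : Measure E} {Z : ℕ → Ω → E} (hZ : ∀ i, Measurable (Z i))
    (hindep : Pairwise ((IndepFun · · μ) on Z)) (hlaw : ∀ i, μ.map (Z i) = Q)
    {φ : E → ℝ} (hφ : Measurable φ) (hφQ : Integrable φ Q) :
    ∀ᵐ ω ∂μ, Tendsto (fun n : ℕ => (∑ i ∈ range n, φ (Z i ω)) / n) atTop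
      (𝓝 (∫ z, φ z ∂Q)) := by
  have hident : ∀ i, IdentDistrib (φ ∘ Z i) (φ ∘ Z 0) μ μ := fun i =>
    IdentDistrib.comp ⟨(hZ i).aemeasurable, (hZ 0).aemeasurable, by rw [hlaw i, hlaw 0]⟩ hφ
  have hint : Integrable (φ ∘ Z 0) μ := by
    rw [← hlaw 0] at hφQ
    exact hφQ.comp_measurable (hZ 0)
  have hmean : ∫ ω, φ (Z 0 ω) ∂μ = ∫ z, φ z ∂Q := by
    rw [← hlaw 0, integral_map (hZ 0).aemeasurable hφ.aestronglyMeasurable]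
  have hslln := strong_law_ae_real (fun i => φ ∘ Z i) hint
    (fun i j hij => (hindep hij).comp hφ hφ) hident
  simp only [comp_apply] at hslln
  rwa [hmean] at hslln

section UniformSLLN

variable {Ω E Λ : Type*} [MeasurableSpace Ω] {μ : Measure Ω} [TopologicalSpace E]
  [MeasurableSpace E] [OpensMeasurableSpace E] [PseudoMetricSpace Λ] [ProperSpace Λ]
  {Q : Measure E} {Z : ℕ → Ω → E} {f : E → Λ → ℝ} {lam₀ : Λ} {δ : ℝ} {g : E → ℝ}

theorem exists_rat_integral_closedBallSup_lt (hf : Continuous (uncurry f)) (hδ : 0 < δ)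
    (hg : Integrable g Q) (hfg : ∀ z, ∀ lam ∈ closedBall lam₀ δ, |f z lam| ≤ g z) {b : ℝ}
    (hb : ∫ z, f z lam₀ ∂Q < b) :
    ∃ q : ℚ, (q : ℝ) ∈ Set.Ioc 0 δ ∧ ∫ z, closedBallSup f lam₀ q z ∂Q < b := by
  obtain ⟨η, hη, hIoo⟩ := mem_nhdsGT_iff_exists_Ioo_subset.1
    ((tendsto_integral_closedBallSup_nhdsGT hf hδ hg hfg).eventually (gt_mem_nhds hb))
  obtain ⟨q, hq0, hq⟩ := exists_rat_btwn (lt_min (Set.mem_Ioi.1 hη) hδ)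
  exact ⟨q, ⟨hq0, hq.le.trans (min_le_right _ _)⟩, hIoo ⟨hq0, hq.trans_le (min_le_left _ _)⟩⟩

theorem ae_eventually_sum_div_lt (hZ : ∀ i, Measurable (Z i))
    (hindep : Pairwise ((IndepFun · · μ) on Z)) (hlaw : ∀ i, μ.map (Z i) = Q)
    (hf : Continuous (uncurry f)) (hδ : 0 < δ) (hg : Integrable g Q)
    (hfg : ∀ z, ∀ lam ∈ closedBall lam₀ δ, |f z lam| ≤ g z) {lamhat : ℕ → Ω → Λ}
    (hlamhat : ∀ᵐ ω ∂μ, Tendsto (fun n => lamhat n ω) atTop (𝓝 lam₀)) :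
    ∀ᵐ ω ∂μ, ∀ b, ∫ z, f z lam₀ ∂Q < b →
      ∀ᶠ n in atTop, (∑ i ∈ range n, f (Z i ω) (lamhat n ω)) / n < b := by
  -- Rational radii: the strong law must hold simultaneously for countably many envelopes.
  have hslln : ∀ᵐ ω ∂μ, ∀ q ∈ {q : ℚ | (q : ℝ) ∈ Set.Ioc 0 δ},
      Tendsto (fun n : ℕ => (∑ i ∈ range n, closedBallSup f lam₀ q (Z i ω)) / n) atTop
        (𝓝 (∫ z, closedBallSup f lam₀ q z ∂Q)) :=
    (ae_ball_iff (Set.to_countable _)).2 fun q hq =>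
      ae_tendsto_sum_comp_div hZ hindep hlaw (continuous_closedBallSup hf q).measurable
        (integrable_closedBallSup hf hg hfg hq.1.le hq.2)
  filter_upwards [hslln, hlamhat] with ω hω hlam b hb
  obtain ⟨q, hq, hqb⟩ := exists_rat_integral_closedBallSup_lt hf hδ hg hfg hb
  filter_upwards [(hω q hq).eventually (gt_mem_nhds hqb),
    hlam.eventually (closedBall_mem_nhds lam₀ hq.1)] with n hn hlamn
  refine lt_of_le_of_lt ?_ hn
  gcongr with i
  exact le_closedBallSup (hf.uncurry_left _) hlamn

end UniformSLLN

theorem uniform_slln_yohai_general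
    {Ω : Type*} [MeasurableSpace Ω] (μ : Measure Ω)
    (k h : ℕ) (Z : ℕ → Ω → EuclideanSpace ℝ (Fin k))
    (hZmeas : ∀ i, Measurable (Z i))
    (hindep : iIndepFun Z μ)
    (Q : Measure (EuclideanSpace ℝ (Fin k)))
    (hlaw : ∀ i, μ.map (Z i) = Q)
    (f : EuclideanSpace ℝ (Fin k) → EuclideanSpace ℝ (Fin h) → ℝ)
    (hf : Continuous (fun q : EuclideanSpace ℝ (Fin k) × EuclideanSpace ℝ (Fin h) => f q.1 q.2))
    (lam₀ : EuclideanSpace ℝ (Fin h)) (δ : ℝ) (hδ : 0 < δ)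
    (hint : Integrable
      (fun z => ⨆ lam : {lam : EuclideanSpace ℝ (Fin h) // ‖lam - lam₀‖ ≤ δ}, |f z lam|) Q)
    (lamhat : ℕ → Ω → EuclideanSpace ℝ (Fin h))
    (hlamhat : ∀ᵐ ω ∂μ, Tendsto (fun n => lamhat n ω) atTop (nhds lam₀)) :
    ∀ᵐ ω ∂μ,
      Tendsto (fun n : ℕ => (1 / n : ℝ) * ∑ i ∈ range n, f (Z i ω) (lamhat n ω))
        atTop (nhds (∫ z, f z lam₀ ∂Q)) := by
  have hf' : Continuous (uncurry f) := hf
  have hfg : ∀ z, ∀ lam ∈ closedBall lam₀ δ,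
      |f z lam| ≤ ⨆ l : {l : EuclideanSpace ℝ (Fin h) // ‖l - lam₀‖ ≤ δ}, |f z l| := by
    intro z lam hlam
    have hbdd : BddAbove (Set.range fun l : {l : EuclideanSpace ℝ (Fin h) // ‖l - lam₀‖ ≤ δ} =>
        |f z l|) := by
      refine ((isCompact_closedBall lam₀ δ).bddAbove_image
        (hf'.uncurry_left z).abs.continuousOn).mono ?_
      rintro _ ⟨l, rfl⟩
      exact ⟨l, by simpa only [mem_closedBall, dist_eq_norm] using l.2, rfl⟩
    rw [mem_closedBall, dist_eq_norm] at hlam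
    exact le_ciSup hbdd ⟨lam, hlam⟩
  have hpair : Pairwise ((IndepFun · · μ) on Z) := fun i j hij => hindep.indepFun hij
  filter_upwards [ae_eventually_sum_div_lt hZmeas hpair hlaw hf' hδ hint hfg hlamhat,
    ae_eventually_sum_div_lt (f := fun z lam => -f z lam) hZmeas hpair hlaw hf'.neg hδ hint
      (by simpa only [Pi.neg_apply, abs_neg] using hfg) hlamhat] with ω hupper hlower
  simp_rw [one_div_mul_eq_div]
  refine tendsto_order.2 ⟨fun a ha => ?_, hupper⟩
  filter_upwards [hlower (-a) (by rwa [integral_neg, neg_lt_neg_iff])] with n hn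
  simpa only [Pi.neg_apply, sum_neg_distrib, neg_div, neg_lt_neg_iff] using hn

/-- Uniform strong law of large numbers (Yohai 1985, Lemma 1). Let `Z₁, Z₂, ...`
be i.i.d. random vectors in `ℝᵏ` with common distribution `Q`, let
`f : ℝᵏ × ℝʰ → ℝ` be continuous, and suppose for some `δ > 0` that
`E_Q[sup_{‖λ - λ₀‖ ≤ δ} |f(Z, λ)|] < ∞`. If `λ̂ₙ → λ₀` almost surely, then
`(1/n) Σᵢ₌₁ⁿ f(Zᵢ, λ̂ₙ) → E_Q[f(Z, λ₀)]` almost surely. -/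
theorem uniform_slln_yohai
    {Ω : Type*} [MeasurableSpace Ω] (μ : Measure Ω) [IsProbabilityMeasure μ]
    (k h : ℕ) (Z : ℕ → Ω → EuclideanSpace ℝ (Fin k))
    (hZmeas : ∀ i, Measurable (Z i))
    (hindep : iIndepFun Z μ)
    (Q : Measure (EuclideanSpace ℝ (Fin k))) [IsProbabilityMeasure Q]
    (hlaw : ∀ i, μ.map (Z i) = Q)
    (f : EuclideanSpace ℝ (Fin k) → EuclideanSpace ℝ (Fin h) → ℝ)
    (hf : Continuous (fun q : EuclideanSpace ℝ (Fin k) × EuclideanSpace ℝ (Fin h) => f q.1 q.2))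
    (lam₀ : EuclideanSpace ℝ (Fin h)) (δ : ℝ) (hδ : 0 < δ)
    (hint : Integrable
      (fun z => ⨆ lam : {lam : EuclideanSpace ℝ (Fin h) // ‖lam - lam₀‖ ≤ δ}, |f z lam|) Q)
    (lamhat : ℕ → Ω → EuclideanSpace ℝ (Fin h))
    (hlamhat : ∀ᵐ ω ∂μ, Tendsto (fun n => lamhat n ω) atTop (nhds lam₀)) :
    ∀ᵐ ω ∂μ,
      Tendsto (fun n : ℕ => (1 / n : ℝ) * ∑ i ∈ range n, f (Z i ω) (lamhat n ω))
        atTop (nhds (∫ z, f z lam₀ ∂Q)) :=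
  uniform_slln_yohai_general μ k h Z hZmeas hindep Q hlaw f hf lam₀ δ hδ hint lamhat hlamhat
end
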